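/- Let D be nonnegative, D(x‖x)=0, and strictly convex in its first argument. If a point w is equidistant and closest to two distinct sites s_i, s_j (D(s_i‖w) = D(s_j‖w) ≤ D(s‖w) for all s ∈ S), then no site of S other than s_i, s_j lies in the closed triangle with vertices s_i, w, s_j. -/
import Mathlib


/-- If `w` is equidistant and closest to two distinct sites `sᵢ, sⱼ`, then no other
site lies in the closed triangle with vertices `sᵢ, w, sⱼ`. -/
theorem no_site_in_triangle
    (S : Finset (EuclideanSpace ℝ (Fin 2)))
    (D : EuclideanSpace ℝ (Fin 2) → EuclideanSpace ℝ (Fin 2) → ℝ)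
    (hnn : ∀ x y, 0 ≤ D x y) (hzero : ∀ x, D x x = 0)
    (hsc : ∀ p, StrictConvexOn ℝ Set.univ fun v => D v p)
    (si sj : EuclideanSpace ℝ (Fin 2)) (hsi : si ∈ S) (hsj : sj ∈ S) (hij : si ≠ sj)
    (w : EuclideanSpace ℝ (Fin 2))
    (heq : D si w = D sj w) (hclosest : ∀ s ∈ S, D si w ≤ D s w) :
    ∀ s ∈ S, s ≠ si → s ≠ sj →
      s ∉ convexHull ℝ ({si, w, sj} : Set (EuclideanSpace ℝ (Fin 2))) := by
  intro s hs hne_i hne_j hmem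
  set r : ℝ := D si w with hr_def
  have hr0 : 0 ≤ r := hnn si w
  have hrs : r ≤ D s w := hclosest s hs
  have hsc' := hsc w
  have hconv := hsc'.convexOn
  -- decompose the triangle hull
  rw [show ({si, w, sj} : Set (EuclideanSpace ℝ (Fin 2)))
        = insert si {w, sj} from rfl,
      convexHull_insert ⟨w, by simp⟩, convexHull_pair] at hmem
  rw [mem_convexJoin] at hmem
  obtain ⟨x, hx, z, hz, hsz⟩ := hmem
  rw [Set.mem_singleton_iff] at hx
  rw [hx] at hsz
  obtain ⟨c, d, hc, hd, hcd, hz'⟩ := hz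
  obtain ⟨a, b, ha, hb, hab, hs'⟩ := hsz
  -- f z ≤ d * r
  have hfz : D z w ≤ d * r := by
    have := hconv.2 (Set.mem_univ w) (Set.mem_univ sj) hc hd hcd
    simpa [← hz', hzero, heq] using this
  -- helper: midpoint contradiction when r = 0 and si ≠ w
  have hmid : r = 0 → si ≠ w → False := by
    intro hr hne
    have := hsc'.2 (Set.mem_univ si) (Set.mem_univ w) hne
      (by norm_num : (0:ℝ) < 1/2) (by norm_num : (0:ℝ) < 1/2) (by norm_num)
    have hlt : D ((1/2 : ℝ) • si + (1/2 : ℝ) • w) w < 0 := by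
      simpa [← hr_def, hr, hzero] using this
    exact absurd (hnn _ _) (not_le.mpr hlt)
  rcases eq_or_lt_of_le hb with hb0 | hbpos
  · -- b = 0, so s = si
    have : a = 1 := by linarith
    apply hne_i
    rw [← hs', ← hb0, this]; simp
  rcases eq_or_lt_of_le ha with ha0 | hapos
  · -- a = 0, so s = z
    have hb1 : b = 1 := by linarith
    have hsz : s = z := by rw [← hs', ← ha0, hb1]; simp
    subst hsz
    rcases eq_or_lt_of_le hc with hc0 | hcpos
    · have hd1 : d = 1 := by linarith
      apply hne_j; rw [← hz', ← hc0, hd1]; simp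
    rcases eq_or_lt_of_le hd with hd0 | hdpos
    · -- s = w
      have hc1 : c = 1 := by linarith
      have hsw : s = w := by rw [← hz', ← hd0, hc1]; simp
      have hr : r = 0 := le_antisymm (by rw [hsw] at hrs; simpa [hzero] using hrs) hr0
      have hne : si ≠ w := fun h => hne_i (by rw [hsw, h])
      exact hmid hr hne
    · -- c, d > 0
      by_cases hwj : w = sj
      · apply hne_j
        rw [← hz', hwj, ← add_smul, hcd]; simp
      · have hlt := hsc'.2 (Set.mem_univ w) (Set.mem_univ sj) hwj hcpos hdpos hcd
        rw [hz'] at hlt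
        simp only [smul_eq_mul, hzero, mul_zero, zero_add] at hlt
        nlinarith [hrs, hlt, hr0]
  · -- a, b > 0
    by_cases hiz : si = z
    · apply hne_i
      rw [← hs', ← hiz, ← add_smul, hab]; simp
    · have hlt := hsc'.2 (Set.mem_univ si) (Set.mem_univ z) hiz hapos hbpos hab
      rw [hs'] at hlt
      simp only [smul_eq_mul] at hlt
      have hri : D si w = r := hr_def.symm
      have h1 : b * D z w ≤ b * (d * r) := mul_le_mul_of_nonneg_left hfz hb
      have h2 : b * (d * r) ≤ b * r :=
        mul_le_mul_of_nonneg_left (mul_le_of_le_one_left hr0 (by linarith)) hb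
      rw [hri] at hlt
      nlinarith [hrs, hlt]
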